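/- Let L ∈ T with root system R. Then (α,β) ∈ ℚ for all α, β ∈ R (after normalizing the form so that (α,α) = 1 for some non-isotropic α). -/
import Mathlib


open scoped Classical

namespace Gen

variable (F L : Type*) [Field F] [CharZero F] [LieRing L] [LieAlgebra F L]

/-- The weight space of a linear functional `α` on a subalgebra `H`. -/
def wt (H : LieSubalgebra F L) (α : Module.Dual F H) : Submodule F L where
  carrier := {x : L | ∀ h : H, ⁅(h : L), x⁆ = α h • x}
  add_mem' := by
    intro a b ha hb h
    rw [lie_add, ha h, hb h, smul_add]
  zero_mem' := by intro h; simp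
  smul_mem' := by
    intro c x hx h
    rw [lie_smul, hx h, smul_comm]

/-- Data for axioms (T1) and (T2): a non-degenerate symmetric invariant bilinear form,
a finite dimensional split toral subalgebra `H` on which the form is non-degenerate,
together with the representatives `t_α ∈ H` of linear functionals on `H`. -/
structure TData where
  B : L →ₗ[F] L →ₗ[F] F
  bsymm : ∀ x y, B x y = B y x
  binv : ∀ x y z, B ⁅x, y⁆ z = B x ⁅y, z⁆
  bnondeg : ∀ x, (∀ y, B x y = 0) → x = 0
  H : LieSubalgebra F L
  hne : H ≠ ⊥
  hfin : FiniteDimensional F H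
  hnondeg : ∀ h : H, (∀ h' : H, B h h' = 0) → h = 0
  decomp : DirectSum.IsInternal (wt F L H)
  t : Module.Dual F H → H
  tspec : ∀ (α : Module.Dual F H) (h : H), B (t α) h = α h

variable {F L}

namespace TData

variable (T : TData F L)

/-- The form transferred to the dual of `H`: `(α, β) = (t_α, t_β)`. -/
def pr (α β : Module.Dual F T.H) : F := T.B (T.t α) (T.t β)

/-- The root system `R = {α : L_α ≠ 0}`. -/
def R : Set (Module.Dual F T.H) := {α | wt F L T.H α ≠ ⊥}

/-- Non-isotropic roots. -/
def Rx : Set (Module.Dual F T.H) := {α | α ∈ T.R ∧ T.pr α α ≠ 0}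

/-- Isotropic roots. -/
def R0 : Set (Module.Dual F T.H) := {α | α ∈ T.R ∧ T.pr α α = 0}

/-- The core: the subalgebra generated by the non-isotropic root spaces. -/
def core : LieSubalgebra F L :=
  LieSubalgebra.lieSpan F L (⋃ α ∈ T.Rx, (wt F L T.H α : Set L))

end TData

variable (F L)

/-- A Lie algebra in the class 𝒯: axioms (T1)–(T6). -/
structure TAlg extends TData F L where
  t3a : ∀ δ ∈ toTData.R0, ∃ x ∈ wt F L toTData.H δ, ∃ y ∈ wt F L toTData.H (-δ),
          ⁅x, y⁆ = (toTData.t δ : L)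
  t3b : ∀ α ∈ toTData.Rx, ∀ x ∈ wt F L toTData.H α, x ≠ 0 →
          ∃ y ∈ wt F L toTData.H (-α), ⁅x, y⁆ = (toTData.t α : L)
  t4 : ∀ α ∈ toTData.Rx, ∀ x ∈ wt F L toTData.H α, ∀ y : L,
          ∃ n : ℕ, ((LieAlgebra.ad F L x) ^ n) y = 0
  t5a : ∀ S1 S2 : Set (Module.Dual F toTData.H), S1.Nonempty → S2.Nonempty →
          S1 ∪ S2 = toTData.Rx → Disjoint S1 S2 →
          ∃ a ∈ S1, ∃ b ∈ S2, toTData.pr a b ≠ 0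
  t5b : ∀ δ ∈ toTData.R0, ∃ α ∈ toTData.Rx, α + δ ∈ toTData.R
  t6free : Module.Free ℤ (AddSubgroup.closure toTData.R0)
  t6fin : Module.Finite ℤ (AddSubgroup.closure toTData.R0)

variable {F L}

lemma mem_wt_iff {H : LieSubalgebra F L} {γ : Module.Dual F H} {v : L} :
    v ∈ wt F L H γ ↔ ∀ h : H, ⁅(h : L), v⁆ = γ h • v := Iff.rfl

lemma lie_mem_wt {H : LieSubalgebra F L} {α γ : Module.Dual F H} {x v : L}
    (hx : x ∈ wt F L H α) (hv : v ∈ wt F L H γ) : ⁅x, v⁆ ∈ wt F L H (α + γ) := by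
  rw [mem_wt_iff]
  intro h
  rw [leibniz_lie, mem_wt_iff.mp hx h, mem_wt_iff.mp hv h, smul_lie, lie_smul,
    LinearMap.add_apply, add_smul]

lemma eq_zero_of_wt_eq_bot {H : LieSubalgebra F L} {γ : Module.Dual F H} {v : L}
    (hbot : wt F L H γ = ⊥) (hv : v ∈ wt F L H γ) : v = 0 := by
  rw [hbot] at hv; simpa using hv

lemma ad_pow_mem_wt {H : LieSubalgebra F L} {α γ : Module.Dual F H} {x v : L}
    (hx : x ∈ wt F L H α) (hv : v ∈ wt F L H γ) (k : ℕ) :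
    ((LieAlgebra.ad F L x) ^ k) v ∈ wt F L H (k • α + γ) := by
  induction k with
  | zero => simpa using hv
  | succ k ih =>
      have h1 : ((LieAlgebra.ad F L x) ^ (k+1)) v = ⁅x, ((LieAlgebra.ad F L x) ^ k) v⁆ := by
        rw [pow_succ']; rfl
      have h2 := lie_mem_wt hx ih
      have h3 : α + (k • α + γ) = (k+1) • α + γ := by
        rw [succ_nsmul]; abel
      rw [h1]
      rwa [h3] at h2

namespace TData

lemma pr_eq_left (T : TData F L) (α β : Module.Dual F T.H) :
    T.pr α β = α (T.t β) := T.tspec α (T.t β)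

lemma pr_symm (T : TData F L) (α β : Module.Dual F T.H) :
    T.pr α β = T.pr β α := T.bsymm _ _

lemma pr_eq_right (T : TData F L) (α β : Module.Dual F T.H) :
    T.pr α β = β (T.t α) := by
  rw [T.pr_symm]; exact T.pr_eq_left β α

lemma pr_add_left (T : TData F L) (α β γ : Module.Dual F T.H) :
    T.pr (α + β) γ = T.pr α γ + T.pr β γ := by
  simp [pr_eq_left]

lemma pr_neg_left (T : TData F L) (α β : Module.Dual F T.H) :
    T.pr (-α) β = -T.pr α β := by
  simp [pr_eq_left]

lemma pr_neg_neg (T : TData F L) (α : Module.Dual F T.H) :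
    T.pr (-α) (-α) = T.pr α α := by
  rw [T.pr_neg_left, T.pr_symm, T.pr_neg_left, T.pr_symm, neg_neg]

end TData

namespace TAlg

variable {T : TAlg F L}

/-- The key sl₂ integrality lemma: `2(β,α) = n (α,α)` for `α` non-isotropic, `β ∈ R`. -/
lemma two_pr_int {α β : Module.Dual F T.toTData.H}
    (hα : α ∈ T.toTData.Rx) (hβ : β ∈ T.toTData.R) :
    ∃ n : ℤ, 2 * T.toTData.pr β α = n * T.toTData.pr α α := by
  classical
  obtain ⟨hαR, ha⟩ := hα
  obtain ⟨x, hx, hx0⟩ := (Submodule.ne_bot_iff _).mp hαR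
  obtain ⟨y, hy, hxy⟩ := T.t3b α ⟨hαR, ha⟩ x hx hx0
  have hta : T.toTData.t α ≠ 0 := by
    intro h
    exact ha (by rw [T.toTData.pr_eq_right, h, map_zero])
  have hy0 : y ≠ 0 := by
    rintro rfl
    rw [lie_zero] at hxy
    exact hta (by exact_mod_cast hxy.symm)
  have hnα : -α ∈ T.toTData.Rx := by
    refine ⟨(Submodule.ne_bot_iff _).mpr ⟨y, hy, hy0⟩, ?_⟩
    rw [T.toTData.pr_neg_neg]; exact ha
  obtain ⟨v, hv, hv0⟩ := (Submodule.ne_bot_iff _).mp hβ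
  set X := LieAlgebra.ad F L x with hX
  set Y := LieAlgebra.ad F L y with hY
  -- top of the string
  have hex : ∃ N, (X ^ N) v = 0 := T.t4 α ⟨hαR, ha⟩ x hx v
  have hn₀pos : 0 < Nat.find hex := by
    rcases Nat.eq_zero_or_pos (Nat.find hex) with h | h
    · exfalso; have := Nat.find_spec hex; rw [h] at this; simp at this; exact hv0 this
    · exact h
  set m := Nat.find hex - 1 with hm
  set u := (X ^ m) v with hu
  have hu0 : u ≠ 0 := Nat.find_min hex (by omega)
  have hXu : X u = 0 := by
    have h1 : (X ^ (m + 1)) v = 0 := by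
      rw [show m + 1 = Nat.find hex by omega]; exact Nat.find_spec hex
    rw [pow_succ'] at h1
    exact h1
  have hu_mem : u ∈ wt F L T.toTData.H (m • α + β) := ad_pow_mem_wt hx hv m
  -- the descending chain
  have hchain : ∀ k : ℕ, (Y ^ k) u ∈ wt F L T.toTData.H (k • (-α) + (m • α + β)) :=
    fun k => ad_pow_mem_wt hy hu_mem k
  set A := α (T.toTData.t α) with hA
  set Bv := β (T.toTData.t α) with hBv
  set b := (m : F) * A + Bv with hb
  have hval : ∀ k : ℕ, (k • (-α) + (m • α + β)) (T.toTData.t α) = b - (k : F) * A := by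
    intro k
    simp only [LinearMap.add_apply, LinearMap.smul_apply, LinearMap.neg_apply,
      smul_eq_mul, ← hA, ← hBv, hb]
    push_cast
    ring
  have hact : ∀ k : ℕ, ⁅(T.toTData.t α : L), (Y ^ k) u⁆ = (b - (k : F) * A) • (Y ^ k) u := by
    intro k
    have h1 := mem_wt_iff.mp (hchain k) (T.toTData.t α)
    rwa [hval k] at h1
  set c : ℕ → F := fun k => (k : F) * b - ((k : F) * ((k : F) - 1) / 2) * A with hc
  have key : ∀ k : ℕ, X ((Y ^ (k + 1)) u) = c (k + 1) • ((Y ^ k) u) := by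
    intro k
    induction k with
    | zero =>
        have h1 : (Y ^ 1) u = ⁅y, u⁆ := by simp [hY, LieAlgebra.ad_apply]
        have h2 : X ⁅y, u⁆ = ⁅x, ⁅y, u⁆⁆ := by simp [hX, LieAlgebra.ad_apply]
        have h3 : ⁅x, u⁆ = 0 := by rw [← LieAlgebra.ad_apply (R := F), ← hX]; exact hXu
        rw [h1, h2, leibniz_lie, h3, lie_zero, add_zero, hxy]
        have h4 := hact 0
        simp only [pow_zero, Module.End.one_apply, Nat.cast_zero, zero_mul, sub_zero] at h4
        simp only [pow_zero, Module.End.one_apply, zero_add]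
        rw [h4]
        congr 1
        norm_num [hc]
    | succ k ih =>
        have h1 : (Y ^ (k + 2)) u = ⁅y, (Y ^ (k + 1)) u⁆ := by
          rw [pow_succ']; simp [hY, LieAlgebra.ad_apply]
        have h2 : ∀ z : L, X z = ⁅x, z⁆ := fun z => by simp [hX, LieAlgebra.ad_apply]
        rw [h1, h2, leibniz_lie, hxy, hact (k + 1), ← h2, ih]
        have h3 : ⁅y, c (k + 1) • (Y ^ k) u⁆ = c (k + 1) • (Y ^ (k + 1)) u := by
          rw [lie_smul]
          congr 1
          rw [pow_succ']; simp [hY, LieAlgebra.ad_apply]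
        rw [h3, ← add_smul]
        congr 1
        simp only [hc]
        push_cast
        ring
  -- bottom of the string
  have hey : ∃ N, (Y ^ N) u = 0 := T.t4 (-α) hnα y hy u
  have hn₁pos : 0 < Nat.find hey := by
    rcases Nat.eq_zero_or_pos (Nat.find hey) with h | h
    · exfalso; have := Nat.find_spec hey; rw [h] at this; simp at this; exact hu0 this
    · exact h
  set n := Nat.find hey - 1 with hn
  have hw0 : (Y ^ n) u ≠ 0 := Nat.find_min hey (by omega)
  have hYn : (Y ^ (n + 1)) u = 0 := by
    rw [show n + 1 = Nat.find hey by omega]; exact Nat.find_spec hey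
  have h0 : c (n + 1) • ((Y ^ n) u) = 0 := by
    rw [← key n, hYn, map_zero]
  have hcz : c (n + 1) = 0 := by
    rcases smul_eq_zero.mp h0 with h | h
    · exact h
    · exact absurd h hw0
  -- conclude
  have hne : ((n : F) + 1) ≠ 0 := by
    have := Nat.cast_add_one_ne_zero (R := F) n
    simpa using this
  have hfac : ((n : F) + 1) * (2 * b - (n : F) * A) = 0 := by
    simp only [hc] at hcz
    push_cast at hcz
    linear_combination 2 * hcz
  have h2b : 2 * b = (n : F) * A := by
    rcases mul_eq_zero.mp hfac with h | h
    · exact absurd h hne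
    · exact sub_eq_zero.mp h
  refine ⟨(n : ℤ) - 2 * (m : ℤ), ?_⟩
  have hpr1 : T.toTData.pr β α = Bv := by rw [T.toTData.pr_symm, T.toTData.pr_eq_right]
  have hpr2 : T.toTData.pr α α = A := T.toTData.pr_eq_right α α
  rw [hpr1, hpr2]
  have hBb : Bv = b - (m : F) * A := by rw [hb]; ring
  rw [hBb]
  push_cast
  linear_combination h2b

/-- All non-isotropic roots have rational square length (via connectedness `t5a`). -/
lemma pr_self_rat (hnorm : ∃ α ∈ T.toTData.Rx, T.toTData.pr α α = 1) :
    ∀ α ∈ T.toTData.Rx, ∃ q : ℚ, T.toTData.pr α α = (q : F) := by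
  obtain ⟨α₀, hα₀, h1⟩ := hnorm
  by_contra hcon
  push_neg at hcon
  obtain ⟨β₀, hβ₀, hbad⟩ := hcon
  set S1 : Set (Module.Dual F T.toTData.H) :=
    {α | α ∈ T.toTData.Rx ∧ ∃ q : ℚ, T.toTData.pr α α = (q : F)} with hS1def
  set S2 : Set (Module.Dual F T.toTData.H) :=
    {α | α ∈ T.toTData.Rx ∧ ¬ ∃ q : ℚ, T.toTData.pr α α = (q : F)} with hS2def
  have hS1 : S1.Nonempty := ⟨α₀, hα₀, 1, by simpa using h1⟩
  have hS2 : S2.Nonempty := ⟨β₀, hβ₀, fun ⟨q, hq⟩ => hbad q hq⟩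
  have hunion : S1 ∪ S2 = T.toTData.Rx := by
    ext δ
    constructor
    · rintro (⟨h, -⟩ | ⟨h, -⟩) <;> exact h
    · intro h
      by_cases hq : ∃ q : ℚ, T.toTData.pr δ δ = (q : F)
      · exact Or.inl ⟨h, hq⟩
      · exact Or.inr ⟨h, hq⟩
  have hdisj : Disjoint S1 S2 := by
    rw [Set.disjoint_left]
    rintro δ ⟨-, hq⟩ ⟨-, hnq⟩
    exact hnq hq
  obtain ⟨p, hp, r, hr, hpr⟩ := T.t5a S1 S2 hS1 hS2 hunion hdisj
  obtain ⟨nz, hnz⟩ := two_pr_int hp.1 hr.1.1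
  obtain ⟨lz, hlz⟩ := two_pr_int hr.1 hp.1.1
  have hprr : T.toTData.pr r p = T.toTData.pr p r := T.toTData.pr_symm r p
  have hl0 : lz ≠ 0 := by
    rintro rfl
    simp only [Int.cast_zero, zero_mul] at hlz
    exact hpr ((mul_eq_zero.mp hlz).resolve_left two_ne_zero)
  obtain ⟨qa, hqa⟩ := hp.2
  have hrr : T.toTData.pr r r = (((nz : ℚ) * qa / (lz : ℚ)) : F) := by
    have hlF : (lz : F) ≠ 0 := by
      simpa using (Int.cast_ne_zero (α := F)).mpr hl0
    rw [hqa] at hnz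
    rw [hprr] at hnz
    -- hnz : 2 * pr p r = nz * qa ; hlz : 2 * pr p r = lz * pr r r
    push_cast
    rw [eq_div_iff hlF]
    linear_combination hnz - hlz
  refine hr.2 ⟨(nz : ℚ) * qa / (lz : ℚ), ?_⟩
  rw [hrr]
  push_cast
  ring

/-- Mixed rationality: `(β, α) ∈ ℚ` for `α` non-isotropic and `β ∈ R`. -/
lemma pr_rat_of_mem_Rx (hnorm : ∃ α ∈ T.toTData.Rx, T.toTData.pr α α = 1)
    {α β : Module.Dual F T.toTData.H}
    (hα : α ∈ T.toTData.Rx) (hβ : β ∈ T.toTData.R) :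
    ∃ q : ℚ, T.toTData.pr β α = (q : F) := by
  obtain ⟨nz, hnz⟩ := two_pr_int hα hβ
  obtain ⟨qa, hqa⟩ := pr_self_rat hnorm α hα
  refine ⟨(nz : ℚ) * qa / 2, ?_⟩
  have hcast : ((((nz : ℚ) * qa / 2) : ℚ) : F) = (nz : F) * (qa : F) / 2 := by
    push_cast; ring
  rw [hcast, ← hqa]
  have h2 : (2 : F) ≠ 0 := two_ne_zero
  field_simp
  linear_combination hnz

/-- Rationality for a pair of isotropic roots. -/
lemma pr_rat_iso (hnorm : ∃ α ∈ T.toTData.Rx, T.toTData.pr α α = 1)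
    {δ ε : Module.Dual F T.toTData.H}
    (hδ : δ ∈ T.toTData.R0) (hε : ε ∈ T.toTData.R0) :
    ∃ q : ℚ, T.toTData.pr δ ε = (q : F) := by
  by_cases h1 : (ε + δ) ∈ T.toTData.R
  · -- ε + δ is a root
    have e1 : T.toTData.pr δ (ε + δ) = T.toTData.pr δ ε := by
      rw [T.toTData.pr_symm δ (ε + δ), T.toTData.pr_add_left, hδ.2, add_zero,
        T.toTData.pr_symm ε δ]
    by_cases hx1 : T.toTData.pr (ε + δ) (ε + δ) = 0
    · refine ⟨0, ?_⟩
      have e2 : T.toTData.pr (ε + δ) (ε + δ) = 2 * T.toTData.pr δ ε := by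
        rw [T.toTData.pr_add_left, T.toTData.pr_symm ε (ε + δ), T.toTData.pr_add_left,
          hε.2, zero_add, e1]
        ring
      rw [e2] at hx1
      have : T.toTData.pr δ ε = 0 := by
        rcases mul_eq_zero.mp hx1 with h | h
        · exact absurd h two_ne_zero
        · exact h
      rw [this]; simp
    · obtain ⟨q, hq⟩ := pr_rat_of_mem_Rx hnorm ⟨h1, hx1⟩ hδ.1
      rw [e1] at hq
      exact ⟨q, hq⟩
  · by_cases h2 : (ε + -δ) ∈ T.toTData.R
    · -- ε - δ is a root
      have e1 : T.toTData.pr δ (ε + -δ) = T.toTData.pr δ ε := by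
        rw [T.toTData.pr_symm δ (ε + -δ), T.toTData.pr_add_left, T.toTData.pr_neg_left,
          hδ.2, neg_zero, add_zero, T.toTData.pr_symm ε δ]
      by_cases hx2 : T.toTData.pr (ε + -δ) (ε + -δ) = 0
      · refine ⟨0, ?_⟩
        have e2 : T.toTData.pr (ε + -δ) (ε + -δ) = -(2 * T.toTData.pr δ ε) := by
          rw [T.toTData.pr_add_left, T.toTData.pr_neg_left δ (ε + -δ), e1,
            T.toTData.pr_symm ε (ε + -δ), T.toTData.pr_add_left, hε.2, zero_add,
            T.toTData.pr_neg_left]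
          ring
        rw [e2] at hx2
        have h2' : 2 * T.toTData.pr δ ε = 0 := by linear_combination -hx2
        have : T.toTData.pr δ ε = 0 := by
          rcases mul_eq_zero.mp h2' with h | h
          · exact absurd h two_ne_zero
          · exact h
        rw [this]; simp
      · obtain ⟨q, hq⟩ := pr_rat_of_mem_Rx hnorm ⟨h2, hx2⟩ hδ.1
        rw [e1] at hq
        exact ⟨q, hq⟩
    · -- neither ε + δ nor ε - δ is a root: Heisenberg argument
      obtain ⟨x, hx, y, hy, hxy⟩ := T.t3a δ hδ
      obtain ⟨v, hv, hv0⟩ := (Submodule.ne_bot_iff _).mp hε.1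
      have hb1 : wt F L T.toTData.H (δ + ε) = ⊥ := by
        rw [add_comm δ ε]; exact not_not.mp h1
      have hb2 : wt F L T.toTData.H (-δ + ε) = ⊥ := by
        rw [add_comm (-δ) ε]; exact not_not.mp h2
      have hz1 : ⁅x, v⁆ = 0 := eq_zero_of_wt_eq_bot hb1 (lie_mem_wt hx hv)
      have hz2 : ⁅y, v⁆ = 0 := eq_zero_of_wt_eq_bot hb2 (lie_mem_wt hy hv)
      have hz : ⁅(T.toTData.t δ : L), v⁆ = 0 := by
        rw [← hxy, lie_lie, hz1, hz2, lie_zero, lie_zero, sub_zero]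
      have hev := mem_wt_iff.mp hv (T.toTData.t δ)
      rw [hz] at hev
      have : ε (T.toTData.t δ) = 0 := by
        rcases smul_eq_zero.mp hev.symm with h | h
        · exact h
        · exact absurd h hv0
      refine ⟨0, ?_⟩
      rw [T.toTData.pr_eq_right, this]
      simp

end TAlg

end Gen

/-- For `L ∈ 𝒯` with the form normalized so that `(α,α) = 1` for some
non-isotropic root `α`, one has `(α,β) ∈ ℚ` for all roots `α, β`. -/
theorem form_rational_on_roots
    (F L : Type*) [Field F] [CharZero F] [LieRing L] [LieAlgebra F L]
    (T : Gen.TAlg F L)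
    (hnorm : ∃ α ∈ T.toTData.Rx, T.toTData.pr α α = 1) :
    ∀ α ∈ T.toTData.R, ∀ β ∈ T.toTData.R, ∃ q : ℚ, T.toTData.pr α β = (q : F) := by
  intro α hα β hβ
  by_cases hb : T.toTData.pr β β = 0
  · by_cases ha : T.toTData.pr α α = 0
    · exact Gen.TAlg.pr_rat_iso hnorm ⟨hα, ha⟩ ⟨hβ, hb⟩
    · obtain ⟨q, hq⟩ := Gen.TAlg.pr_rat_of_mem_Rx hnorm ⟨hα, ha⟩ hβ
      refine ⟨q, ?_⟩
      rw [T.toTData.pr_symm α β]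
      exact hq
  · exact Gen.TAlg.pr_rat_of_mem_Rx hnorm ⟨hβ, hb⟩ hα
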